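/- arXiv:1203.5677 — 2 statements merged into one kernel-verified Lean document; each statement's English description precedes it below -/
import Mathlib

section
/- Let ε : Fin K → ℤ, m : Fin K → Fin n → ℤ satisfy ∑_a ε(a) m_i^{(a)} m_j^{(a)} m_k^{(a)} = 0 for all i,j,k and ∑_a ε(a) m_i^{(a)} m_j^{(a)} = 0 for all i,j. Then for any i and any j, the certificate h_i(x,q;p) = ∏_a ∏_{l=0}^{m_i^{(a)}-1} θ(q^l ∏_k x_k^{m_k^{(a)}}; p)^{ε(a)} is invariant under x_j ↦ p x_j, i.e., h_i(x₁,...,p x_j,...,xₙ, q; p) = h_i(x, q; p). -/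
/-!
Replacing `x_j` by `p x_j` multiplies the monomial `X_a = ∏_k x_k ^ m_k^{(a)}` by `p ^ m_j^{(a)}`.
By the quasi-periodicity `θ(p^t z) = ((-z)^t p^(t(t-1)/2))⁻¹ θ(z)`, the `a`-th factor of the
certificate is then divided by a monomial in `-1`, `q`, `p` and the `x_k`, whose `q`-exponent comes
from `∑_{l<M} l = M(M-1)/2`. After raising to `ε_a` and multiplying over `a`, each exponent is
`∑_a ε_a` times a combination of cubic and quadratic monomials in the `m^{(a)}`, so it vanishes by
the two diophantine conditions.
-/

open Complex Finset

/-- The theta function `θ(z;p) = (z;p)_∞ (p z⁻¹;p)_∞`. -/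
noncomputable def theta (p z : ℂ) : ℂ :=
  (∏' k : ℕ, (1 - z * p ^ k)) * (∏' k : ℕ, (1 - p ^ (k + 1) * z⁻¹))

/-- The `q`-certificate
`h_i(x,q;p) = ∏_a ∏_{l=0}^{m_i^{(a)}-1} θ(q^l ∏_k x_k^{m_k^{(a)}}; p)^{ε(a)}`. -/
noncomputable def certificate {K n : ℕ} (ε : Fin K → ℤ) (m : Fin K → Fin n → ℤ)
    (i : Fin n) (p q : ℂ) (x : Fin n → ℂ) : ℂ :=
  ∏ a : Fin K,
    (∏ l ∈ Finset.range (m a i).toNat, theta p (q ^ l * ∏ k : Fin n, x k ^ m a k)) ^ ε a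

lemma multipliable_one_sub_mul_pow {p : ℂ} (hp : ‖p‖ < 1) (z : ℂ) :
    Multipliable fun k : ℕ ↦ 1 - z * p ^ k := by
  simpa [sub_eq_add_neg] using multipliable_one_add_of_summable (f := fun k : ℕ ↦ -(z * p ^ k))
    (by simpa using (summable_geometric_of_lt_one (norm_nonneg _) hp).mul_left ‖z‖)

lemma tprod_one_sub_mul_pow {p : ℂ} (hp : ‖p‖ < 1) (z : ℂ) :
    ∏' k : ℕ, (1 - z * p ^ k) = (1 - z) * ∏' k : ℕ, (1 - p * z * p ^ k) := by
  rw [tprod_eq_zero_mul' ((multipliable_one_sub_mul_pow hp (p * z)).congr fun k ↦ by ring)]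
  simp only [pow_zero, mul_one, pow_succ]
  congr 2 with k
  ring

lemma theta_p_mul {p : ℂ} (hp : ‖p‖ < 1) (hp0 : p ≠ 0) {z : ℂ} (hz : z ≠ 0) :
    theta p (p * z) = -z⁻¹ * theta p z := by
  have hinv : ∀ k : ℕ, p ^ (k + 1) * (p * z)⁻¹ = z⁻¹ * p ^ k := fun k ↦ by
    field_simp; ring
  have hshift : ∀ k : ℕ, p ^ (k + 1) * z⁻¹ = p * z⁻¹ * p ^ k := fun k ↦ by ring
  simp only [theta, hinv, hshift, tprod_one_sub_mul_pow hp z, tprod_one_sub_mul_pow hp z⁻¹]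
  field_simp
  ring

lemma choose_two_add_one (t : ℤ) : Ring.choose (t + 1) 2 = Ring.choose t 2 + t := by
  rw [Ring.choose_succ_succ, Ring.choose_one_right, add_comm]

lemma two_mul_choose_two (t : ℤ) : 2 * Ring.choose t 2 = t * (t - 1) := by
  induction t using Int.induction_on with
  | zero => simp [Ring.choose_zero_succ]
  | succ k ih => rw [choose_two_add_one]; linear_combination ih
  | pred k ih =>
    have h := choose_two_add_one (-(k : ℤ) - 1)
    rw [sub_add_cancel] at h
    linear_combination ih - 2 * h

lemma theta_p_zpow_mul {p : ℂ} (hp : ‖p‖ < 1) (hp0 : p ≠ 0) {z : ℂ} (hz : z ≠ 0) (t : ℤ) :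
    theta p (p ^ t * z) = ((-z) ^ t * p ^ Ring.choose t 2)⁻¹ * theta p z := by
  have htheta : ∀ t : ℤ, theta p (p ^ (t + 1) * z) = -(p ^ t * z)⁻¹ * theta p (p ^ t * z) :=
    fun t ↦ by rw [zpow_add_one₀ hp0, mul_comm _ p, mul_assoc, theta_p_mul hp hp0
      (mul_ne_zero (zpow_ne_zero t hp0) hz)]
  have hfactor : ∀ t : ℤ, (-z) ^ (t + 1) * p ^ Ring.choose (t + 1) 2 =
      -(p ^ t * z) * ((-z) ^ t * p ^ Ring.choose t 2) := fun t ↦ by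
    rw [choose_two_add_one, zpow_add_one₀ (neg_ne_zero.2 hz), zpow_add₀ hp0]
    ring
  induction t using Int.induction_on with
  | zero => simp
  | succ k ih => rw [htheta, ih, hfactor, mul_inv (-_), inv_neg, mul_assoc]
  | pred k ih =>
    have hne : -(p ^ (-(k : ℤ) - 1) * z)⁻¹ ≠ 0 := by simp [hz, zpow_ne_zero _ hp0]
    rw [← sub_add_cancel (-(k : ℤ)) 1, htheta, hfactor, mul_inv (-_), inv_neg, mul_assoc] at ih
    exact mul_left_cancel₀ hne ih

lemma zpow_finset_sum {ι G₀ : Type*} [CommGroupWithZero G₀] {a : G₀} (ha : a ≠ 0)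
    (s : Finset ι) (f : ι → ℤ) : a ^ (∑ i ∈ s, f i) = ∏ i ∈ s, a ^ f i := by
  classical
  induction s using Finset.induction_on with
  | empty => simp
  | insert i s hi ih => rw [sum_insert hi, prod_insert hi, zpow_add₀ ha, ih]

lemma sum_range_natCast_eq_choose_two (M : ℕ) : ∑ l ∈ range M, (l : ℤ) = Ring.choose (M : ℤ) 2 := by
  rw [Ring.choose_natCast, ← Nat.cast_sum, sum_range_id, Nat.choose_two_right]

noncomputable def quasiPeriodFactor (p q X : ℂ) (t M : ℤ) : ℂ :=
  (-X) ^ (t * M) * q ^ (t * Ring.choose M 2) * p ^ (Ring.choose t 2 * M)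

lemma prod_range_theta_p_zpow_mul {p q X : ℂ} (hp : ‖p‖ < 1) (hp0 : p ≠ 0) (hq : q ≠ 0)
    (hX : X ≠ 0) (t : ℤ) (M : ℕ) :
    ∏ l ∈ range M, theta p (q ^ l * (p ^ t * X)) =
      (quasiPeriodFactor p q X t M)⁻¹ * ∏ l ∈ range M, theta p (q ^ l * X) := by
  have hshift : ∀ l : ℕ, theta p (q ^ l * (p ^ t * X)) =
      ((-X) ^ t * p ^ Ring.choose t 2 * q ^ ((l : ℤ) * t))⁻¹ * theta p (q ^ l * X) := fun l ↦ by
    rw [mul_left_comm, theta_p_zpow_mul hp hp0 (by positivity), neg_mul_eq_mul_neg, mul_zpow,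
      zpow_mul, zpow_natCast]
    ring
  simp only [hshift, prod_mul_distrib, prod_inv_distrib, prod_const, card_range]
  rw [quasiPeriodFactor, ← zpow_finset_sum hq, ← sum_mul, sum_range_natCast_eq_choose_two,
    mul_comm t (Ring.choose (M : ℤ) 2), zpow_mul (-X), zpow_mul p, zpow_natCast, zpow_natCast]
  ring

lemma prod_update_mul_zpow {n : ℕ} (x : Fin n → ℂ) (e : Fin n → ℤ) (j : Fin n) (c : ℂ) :
    ∏ k, Function.update x j (c * x j) k ^ e k = c ^ e j * ∏ k, x k ^ e k := by
  have hupd : ∀ k, Function.update x j (c * x j) k = (Pi.mulSingle j c : Fin n → ℂ) k * x k :=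
    fun k ↦ by rcases eq_or_ne k j with rfl | hk <;> simp [*]
  simp only [hupd, mul_zpow, prod_mul_distrib]
  rw [Fintype.prod_eq_single j fun k hk ↦ by simp [hk]]
  simp

lemma sum_mul_choose_two_eq_zero {ι : Type*} (s : Finset ι) (ε u v : ι → ℤ)
    (h3 : ∑ a ∈ s, ε a * u a * v a * v a = 0) (h2 : ∑ a ∈ s, ε a * u a * v a = 0) :
    ∑ a ∈ s, ε a * u a * Ring.choose (v a) 2 = 0 := by
  have h : 2 * ∑ a ∈ s, ε a * u a * Ring.choose (v a) 2 =
      ∑ a ∈ s, ε a * u a * v a * v a - ∑ a ∈ s, ε a * u a * v a := by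
    rw [mul_sum, ← sum_sub_distrib]
    exact sum_congr rfl fun a _ ↦ by linear_combination (ε a * u a) * two_mul_choose_two (v a)
  linarith

lemma prod_zpow_prod_zpow {ι κ G₀ : Type*} [CommGroupWithZero G₀] (s : Finset ι) (t : Finset κ)
    {x : κ → G₀} (hx : ∀ k ∈ t, x k ≠ 0) (m : ι → κ → ℤ) (e : ι → ℤ) :
    ∏ a ∈ s, (∏ k ∈ t, x k ^ m a k) ^ e a = ∏ k ∈ t, x k ^ ∑ a ∈ s, m a k * e a := by
  simp_rw [← prod_zpow, ← zpow_mul]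
  rw [prod_comm]
  exact prod_congr rfl fun k hk ↦ (zpow_finset_sum (hx k hk) _ _).symm

lemma prod_quasiPeriodFactor_zpow_eq_one {K n : ℕ} {ε : Fin K → ℤ} {m : Fin K → Fin n → ℤ}
    (hcube : ∀ i j k : Fin n, ∑ a : Fin K, ε a * m a i * m a j * m a k = 0)
    (hquad : ∀ i j : Fin n, ∑ a : Fin K, ε a * m a i * m a j = 0)
    (i j : Fin n) {p q : ℂ} (hp0 : p ≠ 0) (hq : q ≠ 0) {x : Fin n → ℂ} (hx : ∀ k, x k ≠ 0) :
    ∏ a, quasiPeriodFactor p q (∏ k, x k ^ m a k) (m a j) (m a i) ^ ε a = 1 := by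
  have hsign : ∑ a, m a j * m a i * ε a = 0 := by
    rw [← hquad i j]; exact sum_congr rfl fun a _ ↦ by ring
  have hmono : ∀ k, ∑ a, m a k * (m a j * m a i * ε a) = 0 := fun k ↦ by
    rw [← hcube i j k]; exact sum_congr rfl fun a _ ↦ by ring
  have hqexp : ∑ a, m a j * Ring.choose (m a i) 2 * ε a = 0 := by
    rw [← sum_mul_choose_two_eq_zero _ ε (m · j) (m · i) (hcube j i i) (hquad j i)]
    exact sum_congr rfl fun a _ ↦ by ring
  have hpexp : ∑ a, Ring.choose (m a j) 2 * m a i * ε a = 0 := by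
    rw [← sum_mul_choose_two_eq_zero _ ε (m · i) (m · j) (hcube i j j) (hquad i j)]
    exact sum_congr rfl fun a _ ↦ by ring
  simp only [quasiPeriodFactor, neg_eq_neg_one_mul (∏ k, _), mul_zpow, ← zpow_mul,
    prod_mul_distrib]
  rw [← zpow_finset_sum (neg_ne_zero.2 one_ne_zero), ← zpow_finset_sum hq, ← zpow_finset_sum hp0,
    prod_zpow_prod_zpow _ _ (fun k _ ↦ hx k), hsign, hqexp, hpexp]
  simp [hmono]

theorem certificate_p_elliptic_in_x_general (K n : ℕ) (ε : Fin K → ℤ) (m : Fin K → Fin n → ℤ)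
    (hcube : ∀ i j k : Fin n, ∑ a : Fin K, ε a * m a i * m a j * m a k = 0)
    (hquad : ∀ i j : Fin n, ∑ a : Fin K, ε a * m a i * m a j = 0)
    (i j : Fin n) (p q : ℂ) (hp : ‖p‖ < 1) (hp0 : p ≠ 0) (hq : q ≠ 0)
    (x : Fin n → ℂ) (hx : ∀ k, x k ≠ 0)
    (hmi : ∀ a : Fin K, 0 ≤ m a i) :
    certificate ε m i p q (Function.update x j (p * x j)) = certificate ε m i p q x := by
  have hM : ∀ a, ((m a i).toNat : ℤ) = m a i := fun a ↦ Int.toNat_of_nonneg (hmi a)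
  have hX : ∀ a, ∏ k, x k ^ m a k ≠ 0 := fun a ↦ prod_ne_zero_iff.2 fun k _ ↦ zpow_ne_zero _ (hx k)
  simp only [certificate, prod_update_mul_zpow, prod_range_theta_p_zpow_mul hp hp0 hq (hX _), hM,
    mul_zpow, prod_mul_distrib, inv_zpow, prod_inv_distrib]
  rw [prod_quasiPeriodFactor_zpow_eq_one hcube hquad i j hp0 hq hx, inv_one, one_mul]

/-- Rains–Spiridonov: under the diophantine conditions, the certificate is invariant
under `x_j ↦ p x_j`. -/
theorem certificate_p_elliptic_in_x (K n : ℕ) (ε : Fin K → ℤ) (m : Fin K → Fin n → ℤ)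
    (hcube : ∀ i j k : Fin n, ∑ a : Fin K, ε a * m a i * m a j * m a k = 0)
    (hquad : ∀ i j : Fin n, ∑ a : Fin K, ε a * m a i * m a j = 0)
    (i j : Fin n) (p q : ℂ) (hp : ‖p‖ < 1) (hp0 : p ≠ 0) (hq : q ≠ 0)
    (x : Fin n → ℂ) (hx : ∀ k, x k ≠ 0)
    (hmi : ∀ a : Fin K, 0 ≤ m a i)
    (hθ : ∀ (a : Fin K) (l : ℕ),
      theta p (q ^ l * ∏ k : Fin n, x k ^ m a k) ≠ 0)
    (hθ' : ∀ (a : Fin K) (l : ℕ),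
      theta p (q ^ l * ∏ k : Fin n, Function.update x j (p * x j) k ^ m a k) ≠ 0) :
    certificate ε m i p q (Function.update x j (p * x j)) = certificate ε m i p q x :=
  certificate_p_elliptic_in_x_general K n ε m hcube hquad i j p q hp hp0 hq x hx hmi
end

section
/- Let ε : Fin K → ℤ, m : Fin K → Fin n → ℤ, R : Fin K → ℝ, γ : Fin n → ℝ, r ∈ ℤ. Suppose R(a) = -2 ∑_i γ_i m_i^{(a)} for all a, and suppose equations ∑_a ε(a) m_i^{(a)} m_j^{(a)} m_k^{(a)} = 0, ∑_a ε(a) m_i^{(a)} m_j^{(a)}(R(a)-1) = 0, ∑_a ε(a) m_i^{(a)}(R(a)-1)² = 0, ∑_a ε(a) m_i^{(a)} = 0 hold for all indices. Then: (i) ∑_a ε(a) m_i^{(a)} m_j^{(a)} = 0 for all i,j; (ii) the two equations ∑_a ε(a)(R(a)-1)³ + r = 0 and ∑_a ε(a)(R(a)-1) + r = 0 are equivalent to the single condition ∑_a ε(a) = r (i.e., each is equivalent to ∑_a ε(a) = r given the other hypotheses). -/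
open Finset

/-! Since `R` is a linear combination of the `m_i`, any weight `f` with `∑_a f(a) m_i^{(a)} = 0`
for all `i` satisfies `∑_a f(a) (R(a) - 1) = -∑_a f(a)`. Applied to the weights
`ε m_i m_j`, `ε m_i`, `ε`, `ε (R-1)` and `ε (R-1)²` in turn, this gives the vanishing of
`∑ ε m_i m_j`, and then `∑ ε (R-1)^k = (-1)^k ∑ ε` for `k = 1, 2, 3`. -/

theorem sum_mul_eq_zero_of_forall_sum_mul_eq_zero {ι σ α : Type*} [CommSemiring α]
    [Fintype σ] (s : Finset ι) (f R : ι → α) (c : σ → α) (m : ι → σ → α)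
    (hR : ∀ a ∈ s, R a = ∑ i, c i * m a i) (hf : ∀ i, ∑ a ∈ s, f a * m a i = 0) :
    ∑ a ∈ s, f a * R a = 0 :=
  calc ∑ a ∈ s, f a * R a = ∑ a ∈ s, ∑ i, c i * (f a * m a i) :=
        sum_congr rfl fun a ha => by
          rw [hR a ha, mul_sum]
          exact sum_congr rfl fun i _ => mul_left_comm _ _ _
    _ = ∑ i, c i * ∑ a ∈ s, f a * m a i := by
        rw [sum_comm]
        simp only [mul_sum]
    _ = 0 := by simp [hf]

theorem sum_mul_sub_one_eq_neg_sum {ι σ α : Type*} [CommRing α] [Fintype σ]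
    (s : Finset ι) (f R : ι → α) (c : σ → α) (m : ι → σ → α)
    (hR : ∀ a ∈ s, R a = ∑ i, c i * m a i) (hf : ∀ i, ∑ a ∈ s, f a * m a i = 0) :
    ∑ a ∈ s, f a * (R a - 1) = -∑ a ∈ s, f a := by
  simp only [mul_sub, mul_one, sum_sub_distrib,
    sum_mul_eq_zero_of_forall_sum_mul_eq_zero s f R c m hR hf, zero_sub]

/-- When the `R`-charges are removable, `R(a) = -2 ∑_i γ_i m_i^{(a)}`, the modular
invariance equations reduce to the Rains–Spiridonov equations, and the two `U(1)_R`
equations each become equivalent to the single condition `∑_a ε(a) = r`. -/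
theorem removable_R_charge_reduction (K n : ℕ) (ε : Fin K → ℤ)
    (m : Fin K → Fin n → ℤ) (R : Fin K → ℝ) (γ : Fin n → ℝ) (r : ℤ)
    (hR : ∀ a : Fin K, R a = -2 * ∑ i : Fin n, γ i * (m a i : ℝ))
    (hcube : ∀ i j k : Fin n, ∑ a : Fin K, ε a * m a i * m a j * m a k = 0)
    (hquadR : ∀ i j : Fin n, ∑ a : Fin K, (ε a : ℝ) * (m a i : ℝ) * (m a j : ℝ) * (R a - 1) = 0)
    (hlinR2 : ∀ i : Fin n, ∑ a : Fin K, (ε a : ℝ) * (m a i : ℝ) * (R a - 1) ^ 2 = 0)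
    (hlin : ∀ i : Fin n, ∑ a : Fin K, ε a * m a i = 0) :
    (∀ i j : Fin n, ∑ a : Fin K, ε a * m a i * m a j = 0) ∧
    ((∑ a : Fin K, (ε a : ℝ) * (R a - 1) ^ 3 + (r : ℝ) = 0) ↔ (∑ a : Fin K, ε a = r)) ∧
    ((∑ a : Fin K, (ε a : ℝ) * (R a - 1) + (r : ℝ) = 0) ↔ (∑ a : Fin K, ε a = r)) := by
  have hR' : ∀ a ∈ univ, R a = ∑ i, (-2 * γ i) * (m a i : ℝ) := fun a _ => by
    rw [hR a, mul_sum]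
    exact sum_congr rfl fun i _ => (mul_assoc _ _ _).symm
  have reduce (f : Fin K → ℝ) :=
    sum_mul_sub_one_eq_neg_sum univ f R _ (fun a i => (m a i : ℝ)) hR'
  have hquad : ∀ i j, ∑ a, (ε a : ℝ) * m a i * m a j = 0 := fun i j => by
    have h := reduce (fun a => ε a * m a i * m a j) fun k => by exact_mod_cast hcube i j k
    rw [hquadR i j] at h
    exact neg_eq_zero.mp h.symm
  have hlinR : ∀ i, ∑ a, (ε a : ℝ) * m a i * (R a - 1) = 0 := fun i => by
    rw [reduce (fun a => ε a * m a i) (hquad i), neg_eq_zero]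
    exact_mod_cast hlin i
  have hR1 : ∑ a, (ε a : ℝ) * (R a - 1) = -∑ a, (ε a : ℝ) :=
    reduce (fun a => ε a) fun i => by exact_mod_cast hlin i
  have hR2 : ∑ a, (ε a : ℝ) * (R a - 1) ^ 2 = ∑ a, (ε a : ℝ) := by
    simp only [sq, ← mul_assoc]
    rw [reduce (fun a => ε a * (R a - 1))
      fun i => (sum_congr rfl fun a _ => mul_right_comm _ _ _).trans (hlinR i), hR1, neg_neg]
  have hR3 : ∑ a, (ε a : ℝ) * (R a - 1) ^ 3 = -∑ a, (ε a : ℝ) := by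
    simp only [pow_succ _ 2, ← mul_assoc]
    rw [reduce (fun a => ε a * (R a - 1) ^ 2)
      fun i => (sum_congr rfl fun a _ => mul_right_comm _ _ _).trans (hlinR2 i), hR2]
  refine ⟨fun i j => by exact_mod_cast hquad i j, ?_, ?_⟩
  · rw [hR3, neg_add_eq_zero]
    norm_cast
  · rw [hR1, neg_add_eq_zero]
    norm_cast
end
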